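/- Let m ≥ 1, n ≥ 1, and for a tuple a = (a_1,…,a_n) ∈ (Fin m)^n set Ξ_F(a) = (δ_{a_n,0} / m^{(n−1)/2}) · exp(2πi·(a_1·a_2 + ⋯ + a_{n−1}·a_n)/m). For θ : Fin n × Fin m → ℝ and x ∈ ℤ^d (with m = 2d) define P_F(θ, x) = Σ_{b∈Fin m} | Σ_{a∈(Fin m)^n, e(a_1)+⋯+e(a_n) = x, a_1 = b} exp(i·Σ_j θ(j, a_j)) · Ξ_F(a) |². Then for every x ∈ ℤ^d, (1/(2π)^{nm}) · ∫_{[0,2π]^{Fin n × Fin m}} P_F(θ, x) dθ = (1/m^{n−1}) · #{ a ∈ (Fin m)^n : e(a_1)+⋯+e(a_n) = x and a_n = 0 }. -/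

import Mathlib

/-!
The phase characters `θ ↦ exp (i ∑ⱼ θ (j, aⱼ))`, one for each path `a`, are orthogonal on the
cube `[0, 2π]^{n × m}`: the product of one character with the conjugate of another splits into
one-dimensional integrals of `exp (i c t)` with `c ∈ {-1, 0, 1}`, and some `c` is nonzero as soon
as the paths differ. So averaging `|∑ₐ exp (i ∑ⱼ θ (j, aⱼ)) Ξ_F(a)|²` over the phases leaves only
the diagonal `∑ₐ |Ξ_F(a)|²`, and `|Ξ_F(a)|² = δ_{aₙ,0} / m^{n-1}`. Summing over the first
label `b` counts every path to `x` exactly once.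
-/

noncomputable section

open scoped BigOperators
open MeasureTheory Real

/-- `Ξ_F(a_1, …, a_n) = (δ_{a_n, 0} / m^{(n-1)/2}) e^{2πi (a_1 a_2 + ⋯ + a_{n-1} a_n)/m}`,
where indices are identified with the integers `0, …, m-1` (the paper's label `|D|`
corresponds to `0`). -/
def XiF (m n : ℕ) (a : Fin n → Fin m) : ℂ :=
  if hn : 0 < n then
    (if (a ⟨n - 1, by omega⟩ : ℕ) = 0 then 1 else 0) / ((Real.sqrt m : ℂ)) ^ (n - 1) *
      Complex.exp (2 * (π : ℂ) * Complex.I *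
        (∑ j : Fin n, if h : (j : ℕ) + 1 < n then
          (((a j : ℕ) : ℂ) * ((a ⟨(j : ℕ) + 1, h⟩ : ℕ) : ℂ)) else 0) / m)
  else 1

/-- The `2d` signed standard basis vectors of `ℤ^d`: `e(2k) = u_k`, `e(2k+1) = -u_k`. -/
def eZ (d : ℕ) (a : Fin (2 * d)) : Fin d → ℤ :=
  Pi.single ⟨(a : ℕ) / 2, by have := a.2; omega⟩ (if (a : ℕ) % 2 = 0 then 1 else -1)

/-- The cube `[0, 2π]^{Fin n × Fin m}` of phase records. -/
def phaseCube (n m : ℕ) : Set (Fin n × Fin m → ℝ) :=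
  Set.pi Set.univ (fun _ => Set.Icc 0 (2 * π))

open Complex in
theorem setIntegral_Icc_exp_I_int_mul (c : ℤ) :
    ∫ t in Set.Icc (0 : ℝ) (2 * π), exp (I * c * t) = if c = 0 then ((2 * π : ℝ) : ℂ) else 0 := by
  rw [integral_Icc_eq_integral_Ioc, ← intervalIntegral.integral_of_le (by positivity)]
  split_ifs with hc
  · simp [hc]
  · have hIc : I * c ≠ 0 := by simp [hc]
    have hperiod : exp (I * c * (2 * π)) = 1 := by
      rw [← exp_int_mul_two_pi_mul_I c]; ring_nf
    simp [integral_exp_mul_complex hIc, hperiod]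

theorem setIntegral_univ_pi_prod {ι : Type*} [Fintype ι] (s : ι → Set ℝ) (g : ι → ℝ → ℂ) :
    ∫ θ in Set.univ.pi s, ∏ i, g i (θ i) = ∏ i, ∫ t in s i, g i t := by
  rw [volume_pi, Measure.restrict_pi_pi, integral_fintype_prod_eq_prod]

section PhaseCharacter

variable {ι κ : Type*} [Fintype ι]

def phaseChar (a : ι → κ) (θ : ι × κ → ℝ) : ℂ :=
  Complex.exp (Complex.I * ((∑ j, θ (j, a j) : ℝ) : ℂ))

@[fun_prop]
theorem continuous_phaseChar (a : ι → κ) : Continuous (phaseChar a) := by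
  unfold phaseChar; fun_prop

variable [Fintype κ] [DecidableEq κ]

theorem sum_apply_graph_eq_sum_ite (a : ι → κ) (θ : ι × κ → ℝ) :
    ∑ j, θ (j, a j) = ∑ p : ι × κ, if a p.1 = p.2 then θ p else 0 := by
  rw [Fintype.sum_prod_type]
  exact Finset.sum_congr rfl fun j _ => by simp

open Complex ComplexConjugate in
theorem phaseChar_mul_conj (a a' : ι → κ) (θ : ι × κ → ℝ) :
    phaseChar a θ * conj (phaseChar a' θ) =
      ∏ p : ι × κ, exp (I * (((if a p.1 = p.2 then 1 else 0) -
        (if a' p.1 = p.2 then 1 else 0) : ℤ) : ℂ) * θ p) := by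
  rw [phaseChar, phaseChar, ← exp_conj, ← Complex.exp_add, ← Complex.exp_sum,
    sum_apply_graph_eq_sum_ite a, sum_apply_graph_eq_sum_ite a']
  congr 1
  simp only [ofReal_sum, Finset.mul_sum, map_sum, map_mul, conj_I, conj_ofReal]
  rw [← Finset.sum_add_distrib]
  refine Finset.sum_congr rfl fun p _ => ?_
  split_ifs <;> push_cast <;> ring

open Complex ComplexConjugate in
theorem setIntegral_phaseChar_mul_conj (a a' : ι → κ) :
    ∫ θ in Set.univ.pi fun _ => Set.Icc 0 (2 * π), phaseChar a θ * conj (phaseChar a' θ) =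
      if a = a' then ((2 * π : ℝ) : ℂ) ^ (Fintype.card ι * Fintype.card κ) else 0 := by
  simp_rw [phaseChar_mul_conj]
  rw [setIntegral_univ_pi_prod (fun _ => Set.Icc 0 (2 * π))
    (fun (p : ι × κ) t => exp (I * (((if a p.1 = p.2 then 1 else 0) -
        (if a' p.1 = p.2 then 1 else 0) : ℤ) : ℂ) * t))]
  simp_rw [setIntegral_Icc_exp_I_int_mul]
  split_ifs with h
  · subst h
    simp
  · obtain ⟨j, hj⟩ := Function.ne_iff.mp h
    exact Finset.prod_eq_zero (Finset.mem_univ (j, a j)) (by simp [Ne.symm hj])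

end PhaseCharacter

open Complex ComplexConjugate in
theorem integral_norm_sq_sum_of_orthogonal {α X : Type*} [MeasurableSpace X] [DecidableEq α]
    {μ : Measure X} (s : Finset α) (f : α → X → ℂ) (c : α → ℂ) (C : ℝ)
    (hint : ∀ a ∈ s, ∀ a' ∈ s, Integrable (fun x => f a x * conj (f a' x)) μ)
    (horth : ∀ a ∈ s, ∀ a' ∈ s, ∫ x, f a x * conj (f a' x) ∂μ = if a = a' then (C : ℂ) else 0) :
    ∫ x, ‖∑ a ∈ s, f a x * c a‖ ^ 2 ∂μ = C * ∑ a ∈ s, ‖c a‖ ^ 2 := by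
  have hexpand : ∀ x, ((‖∑ a ∈ s, f a x * c a‖ ^ 2 : ℝ) : ℂ) =
      ∑ a ∈ s, ∑ a' ∈ s, c a * conj (c a') * (f a x * conj (f a' x)) := by
    intro x
    rw [ofReal_pow, ← mul_conj', map_sum, Finset.sum_mul_sum]
    simp only [map_mul]
    exact Finset.sum_congr rfl fun a _ => Finset.sum_congr rfl fun a' _ => by ring
  apply ofReal_injective
  rw [← integral_complex_ofReal]
  simp_rw [hexpand]
  rw [integral_finsetSum _ fun a ha => integrable_finsetSum _ fun a' ha' =>
    (hint a ha a' ha').const_mul _]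
  push_cast
  rw [Finset.mul_sum]
  refine Finset.sum_congr rfl fun a ha => ?_
  rw [integral_finsetSum _ fun a' ha' => (hint a ha a' ha').const_mul _]
  simp_rw [integral_const_mul]
  rw [Finset.sum_congr rfl fun a' ha' => by rw [horth a ha a' ha']]
  simp [ha, mul_conj', mul_comm]

theorem Continuous.integrableOn_phaseCube {n m : ℕ} {E : Type*} [NormedAddCommGroup E]
    {f : (Fin n × Fin m → ℝ) → E} (hf : Continuous f) : IntegrableOn f (phaseCube n m) :=
  hf.continuousOn.integrableOn_compact (isCompact_univ_pi fun _ => isCompact_Icc)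

theorem norm_sq_XiF {m n : ℕ} (hn : 0 < n) (a : Fin n → Fin m) :
    ‖XiF m n a‖ ^ 2 = (if (a ⟨n - 1, by omega⟩ : ℕ) = 0 then 1 else 0) / (m : ℝ) ^ (n - 1) := by
  have hphase : (2 * (π : ℂ) * Complex.I * (∑ j : Fin n, if h : (j : ℕ) + 1 < n then
      (((a j : ℕ) : ℂ) * ((a ⟨(j : ℕ) + 1, h⟩ : ℕ) : ℂ)) else 0) / m).re = 0 := by
    simp [Complex.re_sum, apply_dite]
  rw [XiF, dif_pos hn, norm_mul, Complex.norm_exp, hphase, Real.exp_zero, mul_one]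
  split_ifs <;> simp [pow_right_comm _ _ 2]

/-- Eq. (68) of the paper: the phase-averaged position distribution of the quantum walk
with random phase shifts driven by the Fourier coin is
`(1/m^{n-1}) #{paths a from 0 to x with a_n = 0}`. -/
theorem mean_probability_fourier (d : ℕ) (n : ℕ) (hn : 1 ≤ n)
    (x : Fin d → ℤ) :
    (1 / (2 * π) ^ (n * (2 * d))) *
        ∫ θ in phaseCube n (2 * d),
          ∑ b : Fin (2 * d),
            ‖∑ a ∈ Finset.univ.filter
                (fun a : Fin n → Fin (2 * d) =>
                  (∑ j : Fin n, eZ d (a j)) = x ∧ a ⟨0, by omega⟩ = b),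
              Complex.exp (Complex.I * ((∑ j : Fin n, θ (j, a j) : ℝ) : ℂ)) *
                XiF (2 * d) n a‖ ^ 2
      = (1 / ((2 * d : ℕ) : ℝ) ^ (n - 1)) *
          (Finset.univ.filter
            (fun a : Fin n → Fin (2 * d) =>
              (∑ j : Fin n, eZ d (a j)) = x ∧ (a ⟨n - 1, by omega⟩ : ℕ) = 0)).card := by
  have hparseval : ∀ s : Finset (Fin n → Fin (2 * d)),
      ∫ θ in phaseCube n (2 * d), ‖∑ a ∈ s, phaseChar a θ * XiF (2 * d) n a‖ ^ 2 =
        (2 * π) ^ (n * (2 * d)) * ∑ a ∈ s, ‖XiF (2 * d) n a‖ ^ 2 := fun s =>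
    integral_norm_sq_sum_of_orthogonal s _ _ _
      (fun a _ a' _ => Continuous.integrableOn_phaseCube (by fun_prop))
      (fun a _ a' _ => by rw [phaseCube, setIntegral_phaseChar_mul_conj]; simp)
  simp only [phaseChar] at hparseval
  rw [integral_finsetSum _ fun b _ => Continuous.integrableOn_phaseCube (by fun_prop)]
  simp_rw [hparseval]
  rw [← Finset.mul_sum, ← mul_assoc, one_div_mul_cancel (by positivity), one_mul]
  have hfiber : ∀ g : (Fin n → Fin (2 * d)) → ℝ,
      ∑ b : Fin (2 * d), ∑ a ∈ Finset.univ.filter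
        (fun a : Fin n → Fin (2 * d) => (∑ j, eZ d (a j)) = x ∧ a ⟨0, by omega⟩ = b), g a =
      ∑ a ∈ Finset.univ.filter (fun a : Fin n → Fin (2 * d) => (∑ j, eZ d (a j)) = x), g a := by
    intro g
    simp_rw [← Finset.filter_filter]
    exact Finset.sum_fiberwise _ _ g
  rw [hfiber]
  simp_rw [norm_sq_XiF (m := 2 * d) hn]
  rw [← Finset.sum_div, Finset.sum_boole, Finset.filter_filter]
  ring
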